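/- Let T be a rooted tree with n leaves and write det(xI − C(T)) = Σ_{k=0}^{n} (−1)^k γ_k(T) x^{n−k} for the characteristic polynomial of its ancestral matrix. Then γ_k(T) equals the number of collections of upward paths, one starting at each leaf and pairwise edge-disjoint, in which exactly k of the paths are non-trivial. Consequently, det(I + C(T)) equals the total number of edge-disjoint collections of upward paths in T. -/

import Mathlib

open Matrix

/-- A rooted tree on a finite vertex type `V`, encoded by its root and the
parent function: the root is its own parent, and iterating the parent function
from any vertex eventually reaches the root.  (These conditions force the graph
whose edges join each non-root vertex to its parent to be a tree.) -/
structure TreeOn (V : Type) [Fintype V] [DecidableEq V] where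
  root : V
  parent : V → V
  parent_root : parent root = root
  reaches : ∀ v, ∃ k, parent^[k] v = root

namespace TreeOn

variable {V : Type} [Fintype V] [DecidableEq V]

/-- `u` is a (weak) ancestor of `v`: some iterate of the parent function sends
`v` to `u`.  (Any ancestor is reached within `Fintype.card V` steps, so the
bound makes the predicate decidable without changing its meaning.) -/
def IsAncestor (T : TreeOn V) (u v : V) : Prop :=
  ∃ k, k ≤ Fintype.card V ∧ T.parent^[k] v = u

instance (T : TreeOn V) (u v : V) : Decidable (T.IsAncestor u v) := by
  have h : T.IsAncestor u v ↔ ∃ k ∈ Finset.range (Fintype.card V + 1), T.parent^[k] v = u := by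
    simp [IsAncestor, Nat.lt_succ_iff]
  rw [h]; infer_instance

/-- The level of a vertex: its distance to the root. -/
def level (T : TreeOn V) (v : V) : ℕ := Nat.find (T.reaches v)

/-- The ancestral level `ℓ(v ∨ w)`: the level of the lowest common ancestor
of `v` and `w`, i.e. the greatest level of a common ancestor. -/
def lcaLevel (T : TreeOn V) (v w : V) : ℕ :=
  (Finset.univ.filter fun u => T.IsAncestor u v ∧ T.IsAncestor u w).sup T.level

/-- A leaf is a vertex with no children. -/
def IsLeaf (T : TreeOn V) (v : V) : Prop := ∀ u, T.parent u = v → u = v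

instance (T : TreeOn V) : DecidablePred T.IsLeaf := fun v =>
  inferInstanceAs (Decidable (∀ u, T.parent u = v → u = v))

/-- The type of leaves of `T`. -/
abbrev Leaf (T : TreeOn V) := {v : V // T.IsLeaf v}

/-- The ancestral matrix `C(T)`, indexed by the leaves of `T`, whose
`(v, w)` entry is the ancestral level `ℓ(v ∨ w)`. -/
noncomputable def ancMatrix (T : TreeOn V) : Matrix T.Leaf T.Leaf ℝ :=
  Matrix.of fun v w => (T.lcaLevel v.1 w.1 : ℝ)

/-- The ancestral spectral radius `ρ_C(T)`: the largest eigenvalue of `C(T)`. -/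
noncomputable def rhoC (T : TreeOn V) : ℝ :=
  sSup {μ : ℝ | ∃ x : T.Leaf → ℝ, x ≠ 0 ∧ T.ancMatrix.mulVec x = μ • x}

/-- The underlying simple graph of the tree: each non-root vertex is joined
to its parent. -/
def graph (T : TreeOn V) : SimpleGraph V :=
  SimpleGraph.fromRel fun u v => T.parent u = v ∧ u ≠ v

/-- The number of children (outdegree) of a vertex. -/
def childCount (T : TreeOn V) (v : V) : ℕ :=
  (Finset.univ.filter fun u => T.parent u = v ∧ u ≠ v).card

end TreeOn

namespace TreeOn

variable {V : Type} [Fintype V] [DecidableEq V]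

/-- An edge-disjoint collection of upward paths: for each leaf `v` a choice of
an upward path starting at `v` (encoded by its number of edges, at most the
level of `v`; the path of length `j` uses the edges whose lower endpoints are
`v, parent v, …, parent^[j−1] v`), such that the chosen paths are pairwise
edge-disjoint. -/
def EDColl (T : TreeOn V) : Type :=
  { P : ∀ v : T.Leaf, Fin (T.level v.1 + 1) //
    ∀ v w : T.Leaf, v ≠ w → ∀ i < (P v).1, ∀ j < (P w).1,
      T.parent^[i] v.1 ≠ T.parent^[j] w.1 }

end TreeOn

/-!
Naming each non-root vertex `u` after the edge joining it to its parent, `ℓ(v ∨ w)` counts the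
edges shared by the root paths of `v` and `w`, so `C(T) = MᵀM` for the edge–leaf incidence
matrix `M`. The coefficient `γ_k` is the sum of the `k × k` principal minors of `C(T)`, and
`det(I + C(T))` the sum of all of them. Expanding `det (M_Sᵀ M_S)` row by row gives a sum over
choices of one edge `g v` on the root path of each leaf `v ∈ S`, i.e. of a top edge for an upward
path from `v`, weighted by the minor of `M` with rows `g`. That minor is `1` when the paths are
edge-disjoint and `0` otherwise: look at the deepest top edge; if another path also passes
through it, two columns coincide, and otherwise its row is a unit vector and it can be removed.
So each principal minor counts the edge-disjoint collections whose non-trivial paths start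
exactly in `S`.
-/

namespace Matrix

variable {m ι R : Type*} [Fintype m] [DecidableEq m] [CommRing R]

theorem det_one_add_eq_sum_det_submatrix (A : Matrix m m R) :
    (1 + A).det = ∑ s : Finset m, (A.submatrix ((↑) : s → m) (↑)).det := by
  rw [add_comm]
  change detRowAlternating (A.row + (1 : Matrix m m R).row) = _
  rw [AlternatingMap.map_add_univ]
  exact Finset.sum_congr rfl fun s _ => det_piecewise_one_eq_submatrix_det A s

theorem det_mul_eq_sum_prod_mul_det_submatrix [Fintype ι] (A : Matrix m ι R)
    (B : Matrix ι m R) :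
    (A * B).det = ∑ g : m → ι, (∏ i, A i (g i)) * (B.submatrix g id).det := by
  have hrows : A * B = of fun i => ∑ k, A i k • B.row k := by
    ext i j
    simp [mul_apply, Finset.sum_apply]
  rw [hrows]
  refine ((detRowAlternating (R := R) (n := m)).toMultilinearMap.map_sum
    fun i k => A i k • B.row k).trans (Finset.sum_congr rfl fun g _ => ?_)
  exact (detRowAlternating.map_smul_univ _ _).trans (smul_eq_mul _ _)

theorem det_eq_det_submatrix_ne_of_row_eq_single (A : Matrix m m R) (i : m)
    (h : A i = Pi.single i 1) :
    A.det = (A.submatrix ((↑) : {j // j ≠ i} → m) (↑)).det := by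
  rw [← det_submatrix_equiv_self (Equiv.sumCompl (· = i)) A]
  have : A.submatrix (Equiv.sumCompl (· = i)) (Equiv.sumCompl (· = i)) =
      fromBlocks 1 0 (A.submatrix (↑) (↑))
        (A.submatrix ((↑) : {j // j ≠ i} → m) (↑)) := by
    ext (⟨a, rfl⟩ | a) (⟨b, rfl⟩ | b) <;> simp [h, Pi.single_apply]
    exact fun hb => absurd hb b.2
  rw [this, det_fromBlocks_zero₁₂, det_one, one_mul]

end Matrix

namespace TreeOn

open Finset Matrix

variable {V : Type} [Fintype V] [DecidableEq V] (T : TreeOn V)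

theorem iterate_parent_root (k : ℕ) : T.parent^[k] T.root = T.root :=
  Function.iterate_fixed T.parent_root k

theorem iterate_parent_level (v : V) : T.parent^[T.level v] v = T.root :=
  Nat.find_spec (T.reaches v)

theorem level_root : T.level T.root = 0 :=
  Nat.find_eq_zero _ |>.2 rfl

theorem level_iterate_parent {v : V} {k : ℕ} (hk : k ≤ T.level v) :
    T.level (T.parent^[k] v) = T.level v - k := by
  have hle : T.level (T.parent^[k] v) ≤ T.level v - k :=
    Nat.find_le <| by
      rw [← Function.iterate_add_apply, Nat.sub_add_cancel hk, iterate_parent_level]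
  have hge : T.level v ≤ T.level (T.parent^[k] v) + k :=
    Nat.find_le (by rw [Function.iterate_add_apply, iterate_parent_level])
  omega

theorem iterate_parent_injOn (v : V) :
    Set.InjOn (fun k => T.parent^[k] v) (Set.Iic (T.level v)) := by
  intro a ha b hb hab
  have := congrArg T.level hab
  simp only at this
  rw [T.level_iterate_parent ha, T.level_iterate_parent hb] at this
  simp only [Set.mem_Iic] at ha hb
  omega

theorem level_lt_card (v : V) : T.level v < Fintype.card V := by
  have := card_le_card_of_injOn _ (fun _ _ => mem_univ _)
    ((T.iterate_parent_injOn v).mono fun k hk => by simpa [Nat.lt_succ_iff] using hk :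
      Set.InjOn (fun k => T.parent^[k] v) (range (T.level v + 1)))
  simpa using this

theorem iterate_parent_of_level_le {v : V} {k : ℕ} (hk : T.level v ≤ k) :
    T.parent^[k] v = T.root := by
  rw [← Nat.sub_add_cancel hk, Function.iterate_add_apply, iterate_parent_level,
    iterate_parent_root]

theorem level_eq_zero_iff {v : V} : T.level v = 0 ↔ v = T.root :=
  ⟨fun h => by simpa [h] using T.iterate_parent_level v, fun h => h ▸ T.level_root⟩

theorem iterate_parent_ne_root {v : V} {k : ℕ} (hk : k < T.level v) :
    T.parent^[k] v ≠ T.root := by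
  rw [Ne, ← T.level_eq_zero_iff, T.level_iterate_parent hk.le]
  omega

theorem exists_le_level_iterate_parent_eq {u v : V} {k : ℕ} (hk : T.parent^[k] v = u) :
    ∃ k' ≤ T.level v, T.parent^[k'] v = u := by
  rcases le_or_gt k (T.level v) with hkv | hvk
  · exact ⟨k, hkv, hk⟩
  · refine ⟨T.level v, le_rfl, ?_⟩
    rw [iterate_parent_level, ← hk, T.iterate_parent_of_level_le hvk.le]

theorem isAncestor_iff_exists_le {u v : V} :
    T.IsAncestor u v ↔ ∃ k ≤ T.level v, T.parent^[k] v = u :=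
  ⟨fun ⟨_, _, hk⟩ => T.exists_le_level_iterate_parent_eq hk,
    fun ⟨k, hk, hku⟩ => ⟨k, hk.trans (T.level_lt_card v).le, hku⟩⟩

theorem isAncestor_iff {u v : V} : T.IsAncestor u v ↔ ∃ k, T.parent^[k] v = u :=
  ⟨fun ⟨k, _, hk⟩ => ⟨k, hk⟩,
    fun ⟨_, hk⟩ => T.isAncestor_iff_exists_le.2 (T.exists_le_level_iterate_parent_eq hk)⟩

theorem isAncestor_refl (v : V) : T.IsAncestor v v :=
  T.isAncestor_iff.2 ⟨0, rfl⟩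

theorem isAncestor_iterate_parent (v : V) (k : ℕ) : T.IsAncestor (T.parent^[k] v) v :=
  T.isAncestor_iff.2 ⟨k, rfl⟩

theorem isAncestor_root (v : V) : T.IsAncestor T.root v :=
  T.iterate_parent_level v ▸ T.isAncestor_iterate_parent v _

theorem IsAncestor.trans {T : TreeOn V} {u w v : V} (huw : T.IsAncestor u w)
    (hwv : T.IsAncestor w v) : T.IsAncestor u v := by
  obtain ⟨a, rfl⟩ := T.isAncestor_iff.1 huw
  obtain ⟨b, rfl⟩ := T.isAncestor_iff.1 hwv
  exact T.isAncestor_iff.2 ⟨a + b, Function.iterate_add_apply _ _ _ _⟩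

theorem IsAncestor.iterate_parent_level_sub {T : TreeOn V} {u v : V} (h : T.IsAncestor u v) :
    T.parent^[T.level v - T.level u] v = u := by
  obtain ⟨k, hk, rfl⟩ := T.isAncestor_iff_exists_le.1 h
  rw [T.level_iterate_parent hk, Nat.sub_sub_self hk]

theorem IsAncestor.level_le {T : TreeOn V} {u v : V} (h : T.IsAncestor u v) :
    T.level u ≤ T.level v := by
  obtain ⟨k, hk, rfl⟩ := T.isAncestor_iff_exists_le.1 h
  rw [T.level_iterate_parent hk]
  omega

theorem IsAncestor.of_level_le {T : TreeOn V} {u u' v : V} (hu : T.IsAncestor u v)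
    (hu' : T.IsAncestor u' v) (h : T.level u ≤ T.level u') : T.IsAncestor u u' := by
  obtain ⟨a, ha, rfl⟩ := T.isAncestor_iff_exists_le.1 hu
  obtain ⟨b, hb, rfl⟩ := T.isAncestor_iff_exists_le.1 hu'
  rw [T.level_iterate_parent ha, T.level_iterate_parent hb] at h
  refine T.isAncestor_iff.2 ⟨a - b, ?_⟩
  rw [← Function.iterate_add_apply, Nat.sub_add_cancel (by omega)]

theorem isAncestor_total {u u' v : V} (hu : T.IsAncestor u v) (hu' : T.IsAncestor u' v) :
    T.IsAncestor u u' ∨ T.IsAncestor u' u :=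
  (le_total (T.level u) (T.level u')).imp (hu.of_level_le hu') (hu'.of_level_le hu)

theorem card_filter_isAncestor (v : V) : #{u | T.IsAncestor u v} = T.level v + 1 := by
  have : ({u | T.IsAncestor u v} : Finset V) =
      (range (T.level v + 1)).image fun k => T.parent^[k] v := by
    ext u
    simp [T.isAncestor_iff_exists_le]
  rw [this, card_image_of_injOn, card_range]
  exact (T.iterate_parent_injOn v).mono fun k hk => by simpa [Nat.lt_succ_iff] using hk

theorem card_filter_ne_root_isAncestor_and_isAncestor (v w : V) :
    #{u | u ≠ T.root ∧ T.IsAncestor u v ∧ T.IsAncestor u w} = T.lcaLevel v w := by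
  obtain ⟨a, ha, hsup⟩ := exists_mem_eq_sup {u | T.IsAncestor u v ∧ T.IsAncestor u w}
    ⟨T.root, by simp [isAncestor_root]⟩ T.level
  simp only [mem_filter, mem_univ, true_and] at ha
  have hcommon : ∀ u, T.IsAncestor u v ∧ T.IsAncestor u w ↔ T.IsAncestor u a := by
    refine fun u =>
      ⟨fun hu => hu.1.of_level_le ha.1 ?_, fun hu => ⟨hu.trans ha.1, hu.trans ha.2⟩⟩
    exact hsup ▸ le_sup (f := T.level) (by simpa using hu)
  have hfilter : ({u | u ≠ T.root ∧ T.IsAncestor u v ∧ T.IsAncestor u w} : Finset V) =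
      ({u | T.IsAncestor u a} : Finset V).erase T.root := by
    ext u
    simp [hcommon]
  rw [hfilter, card_erase_of_mem (by simp [isAncestor_root]), card_filter_isAncestor, lcaLevel,
    hsup, Nat.add_sub_cancel]

/-- A non-root vertex `u` stands for the edge joining `u` to its parent; the `(u, v)` entry is `1`
exactly when that edge lies on the path from `v` to the root. -/
def rootPathIncidence (R : Type*) [Zero R] [One R] : Matrix V V R :=
  of fun u v => if u ≠ T.root ∧ T.IsAncestor u v then 1 else 0

theorem lcaLevel_eq_sum_rootPathIncidence_mul {R : Type*} [NonAssocSemiring R] (v w : V) :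
    (T.lcaLevel v w : R) =
      ∑ u, T.rootPathIncidence R u v * T.rootPathIncidence R u w := by
  simp only [rootPathIncidence, of_apply, ite_zero_mul_ite_zero, mul_one, sum_boole,
    ← card_filter_ne_root_isAncestor_and_isAncestor]
  congr 3 with u
  tauto

theorem ancMatrix_submatrix_eq {m : Type*} (f : m → T.Leaf) :
    T.ancMatrix.submatrix f f =
      ((T.rootPathIncidence ℝ).submatrix id (Subtype.val ∘ f))ᵀ *
        (T.rootPathIncidence ℝ).submatrix id (Subtype.val ∘ f) := by
  ext i j
  simp [ancMatrix, mul_apply, lcaLevel_eq_sum_rootPathIncidence_mul]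

/-- The edges of the upward path from `v` whose highest edge joins `t` to its parent, each edge
named by its lower endpoint. -/
def pathEdges (t v : V) : Finset V := {x | T.IsAncestor t x ∧ T.IsAncestor x v}

theorem disjoint_pathEdges_iff {t v t' v' : V} (ht : T.IsAncestor t v)
    (ht' : T.IsAncestor t' v') :
    Disjoint (T.pathEdges t v) (T.pathEdges t' v') ↔
      ¬(T.IsAncestor t v' ∧ T.IsAncestor t' v) := by
  simp only [pathEdges, disjoint_left, mem_filter, mem_univ, true_and, not_and, and_imp]
  constructor
  · intro h htv' ht'v
    rcases T.isAncestor_total ht ht'v with htt' | ht't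
    · exact h htt' ht'v (T.isAncestor_refl t') ht'
    · exact h (T.isAncestor_refl t) ht ht't htv'
  · intro h x htx hxv ht'x hxv'
    exact h (htx.trans hxv') (ht'x.trans hxv)

theorem mem_pathEdges_iff {t v x : V} (ht : T.IsAncestor t v) :
    x ∈ T.pathEdges t v ↔ ∃ i ≤ T.level v - T.level t, T.parent^[i] v = x := by
  simp only [pathEdges, mem_filter, mem_univ, true_and]
  constructor
  · rintro ⟨htx, hxv⟩
    exact ⟨_, by have := htx.level_le; omega, hxv.iterate_parent_level_sub⟩
  · rintro ⟨i, hi, rfl⟩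
    refine ⟨T.isAncestor_iff.2 ⟨T.level v - T.level t - i, ?_⟩,
      T.isAncestor_iterate_parent v i⟩
    rw [← Function.iterate_add_apply, Nat.sub_add_cancel hi, ht.iterate_parent_level_sub]

theorem disjoint_pathEdges_iff_iterate_parent_ne {t v t' v' : V} (ht : T.IsAncestor t v)
    (ht' : T.IsAncestor t' v') :
    Disjoint (T.pathEdges t v) (T.pathEdges t' v') ↔
      ∀ i ≤ T.level v - T.level t, ∀ j ≤ T.level v' - T.level t',
        T.parent^[i] v ≠ T.parent^[j] v' := by
  simp only [disjoint_left, T.mem_pathEdges_iff ht, T.mem_pathEdges_iff ht']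
  aesop

open Classical in
theorem det_submatrix_rootPathIncidence {R : Type*} [CommRing R] {m : Type*} [Fintype m]
    [DecidableEq m] (g f : m → V) (hg : ∀ j, g j ≠ T.root ∧ T.IsAncestor (g j) (f j)) :
    ((T.rootPathIncidence R).submatrix g f).det =
      if Pairwise fun i j => Disjoint (T.pathEdges (g i) (f i)) (T.pathEdges (g j) (f j))
      then 1 else 0 := by
  have hdisj :
      (Pairwise fun i j => Disjoint (T.pathEdges (g i) (f i)) (T.pathEdges (g j) (f j))) ↔
      Pairwise fun i j => ¬(T.IsAncestor (g i) (f j) ∧ T.IsAncestor (g j) (f i)) :=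
    forall₂_congr fun i j => imp_congr_right fun _ => T.disjoint_pathEdges_iff (hg i).2 (hg j).2
  rw [hdisj]
  clear hdisj
  induction hn : Fintype.card m generalizing m with
  | zero =>
    have := Fintype.card_eq_zero_iff.1 hn
    simp [Subsingleton.pairwise]
  | succ n ih =>
    have : Nonempty m := Fintype.card_pos_iff.1 (by omega)
    obtain ⟨j₀, hj₀⟩ := Finite.exists_max fun j => T.level (g j)
    have hbelow : ∀ i {x}, T.IsAncestor (g j₀) x →
        (T.IsAncestor (g i) x ↔ T.IsAncestor (g i) (g j₀)) :=
      fun i _ hx => ⟨fun hix => hix.of_level_le hx (hj₀ i), fun h => h.trans hx⟩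
    by_cases hshared : ∃ k ≠ j₀, T.IsAncestor (g j₀) (f k)
    · obtain ⟨k, hk, hk'⟩ := hshared
      rw [det_zero_of_column_eq hk.symm fun i => ?_, if_neg]
      · exact fun h => h hk.symm ⟨hk', ((hbelow k hk').1 (hg k).2).trans (hg j₀).2⟩
      · simp [rootPathIncidence, hbelow i (hg j₀).2, hbelow i hk']
    · push Not at hshared
      have hrow : (T.rootPathIncidence R).submatrix g f j₀ = Pi.single j₀ 1 := by
        ext k
        rcases eq_or_ne k j₀ with rfl | hk
        · simp [rootPathIncidence, hg]
        · simp [rootPathIncidence, hk, hshared k hk]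
      rw [det_eq_det_submatrix_ne_of_row_eq_single _ _ hrow, submatrix_submatrix,
        ih (m := {j // j ≠ j₀}) (g ∘ (↑)) (f ∘ (↑)) (fun j => hg j.1)
          (by simp [Fintype.card_subtype_compl, hn])]
      congr 1
      refine propext ⟨fun h i j hij => ?_, fun h i j hij => h (Subtype.val_injective.ne hij)⟩
      rcases eq_or_ne i j₀ with rfl | hi
      · exact fun hc => hshared j hij.symm hc.1
      rcases eq_or_ne j j₀ with rfl | hj
      · exact fun hc => hshared i hi hc.2
      exact h (i := ⟨i, hi⟩) (j := ⟨j, hj⟩) (by simpa using hij)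

/-- `g j` is the top of a nontrivial upward path from `f j` (its highest edge joins `g j` to its
parent), and these paths are pairwise edge-disjoint. -/
def IsEdgeDisjointPathTops {m : Type*} (f g : m → V) : Prop :=
  (∀ j, g j ≠ T.root ∧ T.IsAncestor (g j) (f j)) ∧
    Pairwise fun i j => Disjoint (T.pathEdges (g i) (f i)) (T.pathEdges (g j) (f j))

open Classical in
theorem det_transpose_mul_rootPathIncidence {R : Type*} [CommRing R] {m : Type*} [Fintype m]
    [DecidableEq m] (f : m → V) :
    (((T.rootPathIncidence R).submatrix id f)ᵀ * (T.rootPathIncidence R).submatrix id f).det =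
      #{g : m → V | T.IsEdgeDisjointPathTops f g} := by
  have hterm : ∀ g : m → V,
      (∏ j, ((T.rootPathIncidence R).submatrix id f)ᵀ j (g j)) *
          (((T.rootPathIncidence R).submatrix id f).submatrix g id).det =
        if T.IsEdgeDisjointPathTops f g then 1 else 0 := by
    intro g
    have hprod : ∏ j, ((T.rootPathIncidence R).submatrix id f)ᵀ j (g j) =
        if ∀ j, g j ≠ T.root ∧ T.IsAncestor (g j) (f j) then 1 else 0 := by
      simp only [transpose_apply, submatrix_apply, id, rootPathIncidence, of_apply]
      exact Fintype.prod_boole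
    rw [hprod, submatrix_submatrix, Function.id_comp, Function.comp_id]
    by_cases htops : ∀ j, g j ≠ T.root ∧ T.IsAncestor (g j) (f j)
    · rw [if_pos htops, one_mul, det_submatrix_rootPathIncidence T g f htops]
      simp [IsEdgeDisjointPathTops, htops]
    · simp [IsEdgeDisjointPathTops, htops]
  rw [det_mul_eq_sum_prod_mul_det_submatrix]
  simp_rw [hterm]
  simp

section Collections

variable {T}

instance : Fintype T.EDColl := by
  unfold EDColl
  infer_instance

namespace EDColl

def support (P : T.EDColl) : Finset T.Leaf := {v | (P.1 v).1 ≠ 0}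

/-- The lower endpoint of the highest edge of the path from `v`; junk (`v` itself) when that path
is trivial. -/
def pathTop (P : T.EDColl) (v : T.Leaf) : V := T.parent^[(P.1 v).1 - 1] v

theorem pred_lt_level (P : T.EDColl) {v : T.Leaf} (hv : (P.1 v).1 ≠ 0) :
    (P.1 v).1 - 1 < T.level v := by
  have := (P.1 v).2
  omega

theorem isAncestor_pathTop (P : T.EDColl) (v : T.Leaf) : T.IsAncestor (P.pathTop v) v :=
  T.isAncestor_iterate_parent _ _

theorem level_sub_level_pathTop (P : T.EDColl) {v : T.Leaf} (hv : (P.1 v).1 ≠ 0) :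
    T.level v - T.level (P.pathTop v) = (P.1 v).1 - 1 := by
  rw [pathTop, T.level_iterate_parent (P.pred_lt_level hv).le,
    Nat.sub_sub_self (P.pred_lt_level hv).le]

theorem isEdgeDisjointPathTops_pathTop (P : T.EDColl) {S : Finset T.Leaf}
    (hS : P.support = S) :
    T.IsEdgeDisjointPathTops (fun v : S => v.1.1) fun v => P.pathTop v := by
  have hpos : ∀ v : S, (P.1 v).1 ≠ 0 := fun v => by
    simpa [← hS, support] using v.2
  refine ⟨fun v => ⟨T.iterate_parent_ne_root (P.pred_lt_level (hpos v)),
    P.isAncestor_pathTop v⟩, fun v w hvw => ?_⟩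
  dsimp only
  rw [T.disjoint_pathEdges_iff_iterate_parent_ne (P.isAncestor_pathTop v)
    (P.isAncestor_pathTop w), P.level_sub_level_pathTop (hpos v),
    P.level_sub_level_pathTop (hpos w)]
  intro i hi j hj
  have := hpos v
  have := hpos w
  exact P.2 v w (Subtype.val_injective.ne hvw) i (by omega) j (by omega)

end EDColl

namespace EDColl

def ofPathTops {S : Finset T.Leaf} (g : S → V)
    (hg : T.IsEdgeDisjointPathTops (fun v : S => v.1.1) g) : T.EDColl :=
  ⟨fun v => if h : v ∈ S then
      ⟨T.level v - T.level (g ⟨v, h⟩) + 1, by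
        have := T.level_eq_zero_iff.not.2 (hg.1 ⟨v, h⟩).1
        have : T.level (g ⟨v, h⟩) ≤ T.level v := (hg.1 ⟨v, h⟩).2.level_le
        omega⟩
    else 0, by
    intro v w hvw i hi j hj
    by_cases hv : v ∈ S
    swap; · simp [hv] at hi
    by_cases hw : w ∈ S
    swap; · simp [hw] at hj
    simp only [hv, hw, dif_pos] at hi hj
    have hv' : T.IsAncestor (g ⟨v, hv⟩) v := (hg.1 _).2
    have hw' : T.IsAncestor (g ⟨w, hw⟩) w := (hg.1 _).2
    exact (T.disjoint_pathEdges_iff_iterate_parent_ne hv' hw').1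
      (hg.2 (i := ⟨v, hv⟩) (j := ⟨w, hw⟩) (by simpa using hvw)) i (by omega) j (by omega)⟩

theorem support_ofPathTops {S : Finset T.Leaf} (g : S → V)
    (hg : T.IsEdgeDisjointPathTops (fun v : S => v.1.1) g) : (ofPathTops g hg).support = S := by
  ext v
  by_cases hv : v ∈ S <;> simp [support, ofPathTops, hv]

theorem pathTop_ofPathTops {S : Finset T.Leaf} (g : S → V)
    (hg : T.IsEdgeDisjointPathTops (fun v : S => v.1.1) g) (v : S) :
    (ofPathTops g hg).pathTop v = g v := by
  simp only [pathTop, ofPathTops, v.2, dif_pos, Nat.add_sub_cancel]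
  exact (hg.1 v).2.iterate_parent_level_sub

theorem ofPathTops_pathTop (P : T.EDColl) {S : Finset T.Leaf} (hS : P.support = S)
    (hP : T.IsEdgeDisjointPathTops (fun v : S => v.1.1) fun v => P.pathTop v) :
    ofPathTops (fun v => P.pathTop v) hP = P := by
  refine Subtype.ext (funext fun v => Fin.ext ?_)
  by_cases hv : v ∈ S
  · have hpos : (P.1 v).1 ≠ 0 := by simpa [← hS, support] using hv
    simp only [ofPathTops, hv, dif_pos, P.level_sub_level_pathTop hpos]
    omega
  · have hzero : (P.1 v).1 = 0 := by simpa [← hS, support] using hv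
    simp [ofPathTops, hv, hzero]

end EDColl

open Classical in
theorem card_filter_support_eq_card_pathTops (S : Finset T.Leaf) :
    #{P : T.EDColl | P.support = S} =
      #{g : S → V | T.IsEdgeDisjointPathTops (fun v : S => v.1.1) g} :=
  card_bij' (fun P _ v => P.pathTop v) (fun g hg => .ofPathTops g (mem_filter.1 hg).2)
    (fun P hP =>
      mem_filter.2 ⟨mem_univ _, P.isEdgeDisjointPathTops_pathTop (mem_filter.1 hP).2⟩)
    (fun g _ => mem_filter.2 ⟨mem_univ _, EDColl.support_ofPathTops g _⟩)
    (fun P hP => P.ofPathTops_pathTop (mem_filter.1 hP).2 _)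
    (fun g _ => funext (EDColl.pathTop_ofPathTops g _))

end Collections

theorem det_ancMatrix_submatrix (S : Finset T.Leaf) :
    (T.ancMatrix.submatrix ((↑) : S → T.Leaf) (↑)).det = #{P : T.EDColl | P.support = S} := by
  rw [ancMatrix_submatrix_eq, det_transpose_mul_rootPathIncidence,
    card_filter_support_eq_card_pathTops]
  rfl

theorem natCard_edColl_eq_sum :
    Nat.card T.EDColl = ∑ S : Finset T.Leaf, #{P : T.EDColl | P.support = S} := by
  rw [Nat.card_eq_fintype_card, ← card_univ, card_eq_sum_card_fiberwise (f := EDColl.support)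
    fun _ _ => mem_coe.2 (mem_univ _)]

theorem natCard_card_support_eq_eq_sum (k : ℕ) :
    Nat.card {P : T.EDColl // Nat.card {v : T.Leaf // (P.1 v).1 ≠ 0} = k} =
      ∑ S ∈ univ.powersetCard k, #{P : T.EDColl | P.support = S} := by
  have hsupp (P : T.EDColl) : Nat.card {v : T.Leaf // (P.1 v).1 ≠ 0} = #P.support := by
    rw [Nat.card_eq_fintype_card, Fintype.card_subtype, EDColl.support]
  simp_rw [hsupp]
  rw [Nat.card_eq_fintype_card, Fintype.card_subtype, card_eq_sum_card_fiberwise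
    (f := EDColl.support) (t := univ.powersetCard k) fun P hP => by simpa using hP]
  refine sum_congr rfl fun S hS => ?_
  rw [filter_filter]
  refine congrArg card (filter_congr fun P _ => ?_)
  rw [mem_powersetCard_univ] at hS
  exact ⟨And.right, fun h => ⟨h ▸ hS, h⟩⟩

end TreeOn

/-- Writing `det(xI − C(T)) = Σ_k (−1)^k γ_k(T) x^{n−k}`,
the coefficient `γ_k(T)` counts the edge-disjoint collections of upward paths
in which exactly `k` of the paths are non-trivial; consequently
`det(I + C(T))` is the total number of edge-disjoint collections of upward
paths. -/
theorem charpoly_coeff_ancMatrix_eq_card_edge_disjoint_collections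
    {V : Type} [Fintype V] [DecidableEq V] (T : TreeOn V) :
    (∀ k ≤ Fintype.card T.Leaf,
        T.ancMatrix.charpoly.coeff (Fintype.card T.Leaf - k) =
          (-1 : ℝ) ^ k *
            (Nat.card { P : T.EDColl //
              Nat.card {v : T.Leaf // (P.1 v).1 ≠ 0} = k } : ℝ)) ∧
      (1 + T.ancMatrix).det = (Nat.card T.EDColl : ℝ) := by
  refine ⟨fun k hk => ?_, ?_⟩
  · rw [Matrix.charpoly_coeff_eq_sum_minors _ _ hk, T.natCard_card_support_eq_eq_sum]
    push_cast
    simp_rw [T.det_ancMatrix_submatrix]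
  · rw [Matrix.det_one_add_eq_sum_det_submatrix, T.natCard_edColl_eq_sum]
    push_cast
    simp_rw [T.det_ancMatrix_submatrix]
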